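/- arXiv:1608.04575 — 2 statements merged into one kernel-verified Lean document; each statement's English description precedes it below -/
import Mathlib

section
/- There exists a real-valued function g in the Schwartz space 𝓢(ℝ) such that supp g ⊆ [1,∞), ∫_ℝ g(t) dt ≠ 0, and ∫_ℝ t^k g(t) dt = 0 for every integer k ≥ 1. -/
open MeasureTheory Filter Topology
open scoped ContDiff

namespace MomentsAux

noncomputable def aa : ℕ → ℝ
  | 0 => 1
  | (j+1) => -aa j / (2 ^ (j+1) - 1)

lemma one_le_two_pow (j : ℕ) : (1:ℝ) ≤ 2 ^ j := one_le_pow₀ (by norm_num)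

lemma two_pow_sub_one_pos (j : ℕ) : (0:ℝ) < 2 ^ (j+1) - 1 := by
  have h := one_le_two_pow j
  rw [pow_succ]; nlinarith

lemma aa_succ (j : ℕ) : aa (j+1) = -aa j / (2 ^ (j+1) - 1) := rfl

lemma aa_succ_eq (j : ℕ) : aa (j+1) * 2 ^ (j+1) = aa (j+1) - aa j := by
  have h := two_pow_sub_one_pos j
  rw [aa_succ]
  field_simp
  ring

lemma abs_aa_succ (j : ℕ) : |aa (j+1)| = |aa j| / (2 ^ (j+1) - 1) := by
  rw [aa_succ, abs_div, abs_neg, abs_of_pos (two_pow_sub_one_pos j)]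

lemma summable_aux (m : ℕ) : Summable (fun j => aa j * 2 ^ (j*m)) := by
  apply summable_of_ratio_norm_eventually_le (r := 1/2) (by norm_num)
  filter_upwards [eventually_ge_atTop (m+1)] with j hj
  have hd := two_pow_sub_one_pos j
  have hja : (0:ℝ) ≤ |aa j| := abs_nonneg _
  have hpm : (0:ℝ) < 2 ^ (j*m) := by positivity
  rw [Real.norm_eq_abs, Real.norm_eq_abs, abs_mul, abs_mul, abs_aa_succ]
  have h2 : |(2:ℝ) ^ ((j+1)*m)| = 2 ^ (j*m) * 2 ^ m := by
    rw [abs_of_nonneg (by positivity)]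
    rw [← pow_add]
    congr 1
    ring
  rw [h2, abs_of_nonneg hpm.le]
  have hp : (2:ℝ) ^ (m+2) ≤ 2 ^ (j+1) := by
    apply pow_le_pow_right₀ (by norm_num)
    omega
  have key : (2:ℝ) ^ m / (2 ^ (j+1) - 1) ≤ 1/2 := by
    rw [div_le_iff₀ hd]
    have h4 : (2:ℝ) ^ (m+2) = 4 * 2 ^ m := by rw [pow_add]; ring
    nlinarith [one_le_two_pow m]
  calc |aa j| / (2 ^ (j+1) - 1) * (2 ^ (j*m) * 2 ^ m)
      = (|aa j| * 2 ^ (j*m)) * (2 ^ m / (2 ^ (j+1) - 1)) := by ring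
    _ ≤ (|aa j| * 2 ^ (j*m)) * (1/2) := by
        apply mul_le_mul_of_nonneg_left key (by positivity)
    _ = 1/2 * (|aa j| * 2 ^ (j*m)) := by ring

noncomputable def s (k : ℕ) : ℝ := ∑' j, aa j * 2 ^ (j*k)

lemma s_succ (m : ℕ) : s (m+1) = (1 - 2 ^ m) * s m := by
  have hu := summable_aux m
  have hv := summable_aux (m+1)
  have hu1 : Summable (fun j => aa (j+1) * 2 ^ ((j+1)*m)) := by
    exact (summable_nat_add_iff 1).2 hu
  have hu2 : Summable (fun j => (2:ℝ) ^ m * (aa j * 2 ^ (j*m))) := hu.mul_left _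
  have key : ∀ j : ℕ, aa (j+1) * 2 ^ ((j+1)*(m+1))
      = aa (j+1) * 2 ^ ((j+1)*m) - 2 ^ m * (aa j * 2 ^ (j*m)) := by
    intro j
    have e1 : (j+1)*(m+1) = (j+1)*m + (j+1) := by ring
    have e2 : (j+1)*m = j*m + m := by ring
    rw [e1, pow_add, e2, pow_add]
    have h2 := aa_succ_eq j
    linear_combination (2^(j*m) * (2:ℝ)^m) * h2
  have expand : s (m+1) = aa 0 * 2 ^ (0*(m+1)) + ∑' j, aa (j+1) * 2 ^ ((j+1)*(m+1)) :=
    Summable.tsum_eq_zero_add hv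
  have expand0 : s m = aa 0 * 2 ^ (0*m) + ∑' j, aa (j+1) * 2 ^ ((j+1)*m) :=
    Summable.tsum_eq_zero_add hu
  have hsum : ∑' j, aa (j+1) * 2 ^ ((j+1)*(m+1))
      = (∑' j, aa (j+1) * 2 ^ ((j+1)*m)) - 2 ^ m * s m := by
    simp only [s]
    rw [← tsum_mul_left (a := (2:ℝ)^m), ← Summable.tsum_sub hu1 hu2]
    exact tsum_congr key
  rw [expand, hsum]
  simp only [Nat.zero_mul, pow_zero, mul_one] at expand expand0 ⊢
  linarith [expand0]

lemma s_eq_zero {k : ℕ} (hk : 1 ≤ k) : s k = 0 := by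
  induction k with
  | zero => omega
  | succ m ih =>
    rw [s_succ]
    rcases Nat.eq_zero_or_pos m with h | h
    · subst h; norm_num
    · rw [ih h, mul_zero]

lemma aa_one : aa 1 = -1 := by
  rw [aa_succ]; norm_num [aa]

lemma aa_two : aa 2 = 1/3 := by
  rw [aa_succ, aa_one]; norm_num

lemma aa_three : aa 3 = -(1/21) := by
  rw [aa_succ, aa_two]; norm_num

lemma abs_aa_three_add (j : ℕ) : |aa (j+3)| ≤ (1/21) * (1/15) ^ j := by
  induction j with
  | zero =>
    rw [aa_three, abs_neg, abs_of_pos (by norm_num : (0:ℝ) < 1/21)]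
    norm_num
  | succ j ih =>
    have h := abs_aa_succ (j+3)
    have hd := two_pow_sub_one_pos (j+3)
    have h15 : (15:ℝ) ≤ 2 ^ (j+3+1) - 1 := by
      have : (2:ℝ)^4 ≤ 2 ^ (j+4) := pow_le_pow_right₀ (by norm_num) (by omega)
      norm_num at this ⊢
      linarith
    have step : |aa (j+1+3)| ≤ |aa (j+3)| / 15 := by
      have e : j+1+3 = j+3+1 := by omega
      rw [e, h]
      gcongr
    calc |aa (j+1+3)| ≤ |aa (j+3)| / 15 := step
      _ ≤ ((1/21) * (1/15)^j) / 15 := by gcongr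
      _ = (1/21) * (1/15)^(j+1) := by rw [pow_succ]; ring

lemma s_zero_pos : 0 < s 0 := by
  have hu := summable_aux 0
  have hsum : Summable aa := by simpa using hu
  have hs0 : s 0 = ∑' j, aa j := by
    simp only [s, Nat.mul_zero, pow_zero, mul_one]
  have hsplit := Summable.sum_add_tsum_nat_add 3 hsum
  have hhead : ∑ i ∈ Finset.range 3, aa i = 1/3 := by
    rw [Finset.sum_range_succ, Finset.sum_range_succ, Finset.sum_range_one,
      aa_one, aa_two]
    norm_num [aa]
  have htail_sum : Summable (fun j => aa (j+3)) := (summable_nat_add_iff 3).2 hsum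
  have hgeo : Summable (fun j : ℕ => (1/21) * (1/15:ℝ)^j) :=
    (summable_geometric_of_lt_one (by norm_num) (by norm_num)).mul_left _
  have htail : |∑' j, aa (j+3)| ≤ (1/21) * (1 - 1/15:ℝ)⁻¹ := by
    calc |∑' j, aa (j+3)| ≤ ∑' j, |aa (j+3)| := by
          simpa using norm_tsum_le_tsum_norm (f := fun j => aa (j+3)) (by simpa using htail_sum.abs)
      _ ≤ ∑' j : ℕ, (1/21) * (1/15:ℝ)^j :=
          Summable.tsum_le_tsum (fun j => abs_aa_three_add j) htail_sum.abs hgeo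
      _ = (1/21) * (1 - 1/15:ℝ)⁻¹ := by
          rw [tsum_mul_left, tsum_geometric_of_lt_one (by norm_num) (by norm_num)]
  have habs := abs_le.1 htail
  have : s 0 = 1/3 + ∑' j, aa (j+3) := by
    rw [hs0, ← hsplit, hhead]
  rw [this]
  have : (1/21) * (1 - 1/15:ℝ)⁻¹ = 5/98 := by norm_num
  rw [this] at habs
  linarith [habs.1]

noncomputable def bump : ContDiffBump (3/2 : ℝ) := ⟨1/8, 1/4, by norm_num, by norm_num⟩

lemma bump_zero_left {x : ℝ} (hx : x ≤ 5/4) : bump x = 0 := by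
  apply bump.zero_of_le_dist
  show (1/4 : ℝ) ≤ dist x (3/2)
  rw [Real.dist_eq]
  exact le_abs.2 (Or.inr (by linarith))

lemma bump_zero_right {x : ℝ} (hx : 7/4 ≤ x) : bump x = 0 := by
  apply bump.zero_of_le_dist
  show (1/4 : ℝ) ≤ dist x (3/2)
  rw [Real.dist_eq]
  exact le_abs.2 (Or.inl (by linarith))

noncomputable def TT (j : ℕ) : ℝ → ℝ :=
  fun t => (aa j * ((2:ℝ) ^ j)⁻¹) * bump (((2:ℝ) ^ j)⁻¹ * t)

lemma two_pow_pos (j : ℕ) : (0:ℝ) < 2 ^ j := by positivity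

lemma TT_zero_left {i : ℕ} {t : ℝ} (h : t ≤ (2:ℝ)^i * (5/4)) : TT i t = 0 := by
  have h2 := two_pow_pos i
  have harg : ((2:ℝ)^i)⁻¹ * t ≤ 5/4 := by
    rw [inv_mul_le_iff₀ h2]
    linarith
  rw [TT, bump_zero_left harg, mul_zero]

lemma TT_zero_right {i : ℕ} {t : ℝ} (h : (2:ℝ)^i * (7/4) ≤ t) : TT i t = 0 := by
  have h2 := two_pow_pos i
  have harg : (7/4 : ℝ) ≤ ((2:ℝ)^i)⁻¹ * t := by
    rw [le_inv_mul_iff₀ h2]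
    linarith
  rw [TT, bump_zero_right harg, mul_zero]

noncomputable def gg : ℝ → ℝ := fun t => ∑' j, TT j t

def VV (j : ℕ) : Set ℝ := Set.Ioo ((2:ℝ)^j * (7/8)) ((2:ℝ)^j * (9/4))

lemma gg_eq_on_V {j : ℕ} {t : ℝ} (ht : t ∈ VV j) : gg t = TT j t := by
  apply tsum_eq_single
  intro i hij
  have h2i := two_pow_pos i
  have h2j := two_pow_pos j
  rcases lt_or_gt_of_ne hij with hlt | hgt
  · apply TT_zero_right
    have hp : (2:ℝ)^(i+1) ≤ 2^j := pow_le_pow_right₀ (by norm_num) (by omega)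
    rw [pow_succ] at hp
    have ht1 := ht.1
    nlinarith
  · apply TT_zero_left
    have hp : (2:ℝ)^(j+1) ≤ 2^i := pow_le_pow_right₀ (by norm_num) (by omega)
    rw [pow_succ] at hp
    have ht2 := ht.2
    nlinarith

lemma gg_eq_zero {t : ℝ} (ht : t < 5/4) : gg t = 0 := by
  have hz : ∀ i, TT i t = 0 := by
    intro i
    apply TT_zero_left
    have h1 := one_le_two_pow i
    nlinarith
  simp only [gg, hz, tsum_zero]

lemma exists_V {t : ℝ} (ht : 5/4 ≤ t) : ∃ j : ℕ, t ∈ VV j := by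
  have ht0 : (0:ℝ) < t := by linarith
  have ht1 : (1:ℝ) ≤ t := by linarith
  have hn0 : 0 ≤ Int.log 2 t :=
    (Int.log_one_right 2 (R := ℝ)).symm.trans_le (Int.log_mono_right one_pos ht1)
  have hpow : (2:ℝ) ^ (Int.log 2 t) ≤ t := by
    have h := Int.zpow_log_le_self (R := ℝ) (b := 2) (by norm_num) ht0
    norm_num at h
    exact h
  have hpow2 : t < (2:ℝ) ^ (Int.log 2 t + 1) := by
    have h := Int.lt_zpow_succ_log_self (R := ℝ) (b := 2) (by norm_num) t
    norm_num at h
    exact h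
  have he : (2:ℝ) ^ (Int.log 2 t).toNat = (2:ℝ) ^ (Int.log 2 t) := by
    rw [← zpow_natCast, Int.toNat_of_nonneg hn0]
  have h2 : (2:ℝ) ^ (Int.log 2 t + 1) = (2:ℝ) ^ (Int.log 2 t) * 2 :=
    zpow_add_one₀ (by norm_num) _
  have hp : (0:ℝ) < (2:ℝ) ^ (Int.log 2 t) := by positivity
  refine ⟨(Int.log 2 t).toNat, ?_, ?_⟩
  · show (2:ℝ) ^ (Int.log 2 t).toNat * (7/8) < t
    rw [he]
    nlinarith
  · show t < (2:ℝ) ^ (Int.log 2 t).toNat * (9/4)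
    rw [he]
    nlinarith

lemma TT_contDiff (j : ℕ) : ContDiff ℝ ∞ (TT j) :=
  contDiff_const.mul (bump.contDiff.comp (contDiff_const.mul contDiff_id))

lemma gg_smooth : ContDiff ℝ ∞ gg := by
  rw [contDiff_iff_contDiffAt]
  intro t
  rcases lt_or_ge t (5/4) with h | h
  · exact contDiffAt_const.congr_of_eventuallyEq
      (eventually_of_mem (Iio_mem_nhds h) (fun x hx => gg_eq_zero hx))
  · obtain ⟨j, hj⟩ := exists_V h
    exact ((TT_contDiff j).contDiffAt).congr_of_eventuallyEq
      (eventually_of_mem (isOpen_Ioo.mem_nhds hj) (fun x hx => gg_eq_on_V hx))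

lemma aa_bound (k : ℕ) : ∃ A : ℝ, 0 ≤ A ∧ ∀ j, |aa j| * 2 ^ (j*k) ≤ A := by
  set f : ℕ → ℝ := fun j => |aa j| * 2 ^ (j*k) with hf
  have hne : (Finset.range (k+1)).Nonempty := ⟨0, by simp⟩
  refine ⟨(Finset.range (k+1)).sup' hne f, ?_, ?_⟩
  · calc (0:ℝ) ≤ f 0 := by positivity
      _ ≤ _ := Finset.le_sup' f (by simp)
  · have step : ∀ j, k ≤ j → f (j+1) ≤ f j := by
      intro j hj
      have hd := two_pow_sub_one_pos j
      have hkj : (2:ℝ) ^ k ≤ 2 ^ (j+1) - 1 := by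
        have h1 : (2:ℝ) ^ k ≤ 2 ^ j := pow_le_pow_right₀ (by norm_num) hj
        have h2 := one_le_two_pow j
        rw [pow_succ]
        nlinarith
      have hexp : (j+1)*k = j*k + k := by ring
      simp only [hf]
      rw [abs_aa_succ, hexp]
      rw [div_mul_eq_mul_div, div_le_iff₀ hd]
      have hsplit : (2:ℝ) ^ (j*k + k) = 2 ^ (j*k) * 2 ^ k := pow_add 2 (j*k) k
      rw [hsplit]
      have hbase : (0:ℝ) ≤ |aa j| * 2 ^ (j*k) := by positivity
      nlinarith [mul_le_mul_of_nonneg_left hkj hbase]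
    intro j
    induction j with
    | zero => exact Finset.le_sup' f (by simp)
    | succ m ih =>
      rcases lt_or_ge m k with h | h
      · exact Finset.le_sup' f (by simp; omega)
      · exact le_trans (step m h) ih

lemma bump_bound (n : ℕ) : ∃ B : ℝ, 0 ≤ B ∧ ∀ y, ‖iteratedDeriv n (⇑bump) y‖ ≤ B := by
  obtain ⟨C, hC⟩ := (bump.contDiff (n := (n:ℕ∞)).continuous_iteratedFDeriv
    (le_refl _)).bounded_above_of_compact_support (bump.hasCompactSupport.iteratedFDeriv n)
  refine ⟨max C 0, le_max_right _ _, fun y => ?_⟩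
  rw [← norm_iteratedFDeriv_eq_norm_iteratedDeriv]
  exact le_trans (hC y) (le_max_left _ _)

lemma TT_deriv_bound (n : ℕ) (B : ℝ) (hB : ∀ y, ‖iteratedDeriv n (⇑bump) y‖ ≤ B)
    (j : ℕ) (x : ℝ) : ‖iteratedFDeriv ℝ n (TT j) x‖ ≤ |aa j| * B := by
  have h2 := two_pow_pos j
  have hd0 : (0:ℝ) < ((2:ℝ)^j)⁻¹ := by positivity
  have hd1 : ((2:ℝ)^j)⁻¹ ≤ 1 := by
    rw [inv_le_one_iff₀]
    right
    exact one_le_two_pow j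
  set c : ℝ := aa j * ((2:ℝ)^j)⁻¹ with hc
  set h : ℝ → ℝ := fun t => bump (((2:ℝ)^j)⁻¹ * t) with hh
  have hcd : ContDiff ℝ n h :=
    bump.contDiff.comp (contDiff_const.mul contDiff_id)
  have e1 : TT j = c • h := by
    funext t
    simp [TT, hc, hh, mul_assoc]
  rw [e1, iteratedFDeriv_const_smul_apply hcd.contDiffAt,
    norm_smul c (iteratedFDeriv ℝ n h x)]
  have e2 : ‖iteratedFDeriv ℝ n h x‖ = ‖iteratedDeriv n h x‖ :=
    norm_iteratedFDeriv_eq_norm_iteratedDeriv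
  have e3 : iteratedDeriv n h x
      = (((2:ℝ)^j)⁻¹) ^ n • iteratedDeriv n (⇑bump) (((2:ℝ)^j)⁻¹ * x) := by
    have := iteratedDeriv_comp_const_smul (n := n) (f := ⇑bump)
      bump.contDiff (((2:ℝ)^j)⁻¹)
    exact congrFun this x
  have hnorm : ‖iteratedDeriv n h x‖ ≤ B := by
    rw [e3, norm_smul]
    have h1 : ‖(((2:ℝ)^j)⁻¹) ^ n‖ ≤ 1 := by
      rw [Real.norm_eq_abs, abs_of_pos (by positivity)]
      exact pow_le_one₀ hd0.le hd1
    have h2' := hB (((2:ℝ)^j)⁻¹ * x)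
    have hB0 : 0 ≤ B := le_trans (norm_nonneg _) (hB 0)
    calc ‖(((2:ℝ)^j)⁻¹) ^ n‖ * ‖iteratedDeriv n (⇑bump) (((2:ℝ)^j)⁻¹ * x)‖
        ≤ 1 * B := mul_le_mul h1 h2' (norm_nonneg _) zero_le_one
      _ = B := one_mul B
  calc ‖c‖ * ‖iteratedFDeriv ℝ n h x‖ ≤ ‖c‖ * B := by
        rw [e2]
        exact mul_le_mul_of_nonneg_left hnorm (norm_nonneg c)
    _ ≤ |aa j| * B := by
        have : ‖c‖ ≤ |aa j| := by
          rw [hc, Real.norm_eq_abs, abs_mul, abs_of_pos hd0]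
          calc |aa j| * ((2:ℝ)^j)⁻¹ ≤ |aa j| * 1 :=
                mul_le_mul_of_nonneg_left hd1 (abs_nonneg _)
            _ = |aa j| := mul_one _
        have hB0 : 0 ≤ B := le_trans (norm_nonneg _) (hB 0)
        exact mul_le_mul_of_nonneg_right this hB0

lemma iteratedFDeriv_congr_ev {f h : ℝ → ℝ} {x : ℝ} (he : f =ᶠ[𝓝 x] h) (n : ℕ) :
    iteratedFDeriv ℝ n f x = iteratedFDeriv ℝ n h x := by
  rw [← iteratedFDerivWithin_univ, ← iteratedFDerivWithin_univ]
  have he' : f =ᶠ[𝓝[Set.univ] x] h := by rwa [nhdsWithin_univ]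
  exact he'.iteratedFDerivWithin_eq he.self_of_nhds n

lemma gg_decay (k n : ℕ) : ∃ C : ℝ, ∀ x, ‖x‖ ^ k * ‖iteratedFDeriv ℝ n gg x‖ ≤ C := by
  obtain ⟨B, hB0, hB⟩ := bump_bound n
  obtain ⟨A, hA0, hA⟩ := aa_bound k
  refine ⟨(9/4)^k * (A * B), fun x => ?_⟩
  have hC0 : (0:ℝ) ≤ (9/4)^k * (A * B) := by positivity
  rcases lt_or_ge x (5/4) with h | h
  · have hx : iteratedFDeriv ℝ n gg x = 0 := by
      have he : gg =ᶠ[𝓝 x] (fun _ => (0:ℝ)) :=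
        eventually_of_mem (Iio_mem_nhds h) (fun y hy => gg_eq_zero hy)
      rw [iteratedFDeriv_congr_ev he n, iteratedFDeriv_zero_fun]
      rfl
    rw [hx, norm_zero, mul_zero]
    exact hC0
  · obtain ⟨j, hj⟩ := exists_V h
    have h2j := two_pow_pos j
    have hx : iteratedFDeriv ℝ n gg x = iteratedFDeriv ℝ n (TT j) x :=
      iteratedFDeriv_congr_ev
        (eventually_of_mem (isOpen_Ioo.mem_nhds hj) (fun y hy => gg_eq_on_V hy)) n
    rw [hx]
    have hxpos : (0:ℝ) < x := lt_trans (by positivity) hj.1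
    have h1 : ‖x‖ ≤ 2^j * (9/4) := by
      rw [Real.norm_eq_abs, abs_of_pos hxpos]
      exact hj.2.le
    calc ‖x‖^k * ‖iteratedFDeriv ℝ n (TT j) x‖
        ≤ (2^j * (9/4))^k * (|aa j| * B) :=
          mul_le_mul (pow_le_pow_left₀ (norm_nonneg x) h1 k)
            (TT_deriv_bound n B hB j x) (norm_nonneg _) (by positivity)
      _ = (9/4)^k * ((|aa j| * 2^(j*k)) * B) := by
          rw [mul_pow, pow_mul]
          ring
      _ ≤ (9/4)^k * (A * B) := by
          apply mul_le_mul_of_nonneg_left _ (by positivity)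
          exact mul_le_mul_of_nonneg_right (hA j) hB0

noncomputable def GG : SchwartzMap ℝ ℝ := ⟨gg, gg_smooth, gg_decay⟩

lemma TT_continuous (j : ℕ) : Continuous (TT j) := (TT_contDiff j).continuous

lemma TT_hasCompactSupport (j : ℕ) : HasCompactSupport (TT j) := by
  apply HasCompactSupport.intro (isCompact_Icc (a := (2:ℝ)^j * (5/4)) (b := (2:ℝ)^j * (7/4)))
  intro x hx
  rw [Set.mem_Icc, not_and_or] at hx
  rcases hx with h | h
  · exact TT_zero_left (le_of_not_ge h)
  · exact TT_zero_right (le_of_not_ge h)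

lemma integrable_tk_TT (k j : ℕ) : Integrable (fun t : ℝ => t^k * TT j t) := by
  apply Continuous.integrable_of_hasCompactSupport
    ((continuous_pow k).mul (TT_continuous j))
  exact (TT_hasCompactSupport j).mul_left

lemma pull_const (j : ℕ) (t : ℝ) : (2:ℝ)^j * (((2:ℝ)^j)⁻¹ * t) = t := by
  have h2 := two_pow_pos j
  field_simp

lemma integral_tk_TT (k j : ℕ) :
    ∫ t : ℝ, t^k * TT j t = aa j * 2^(j*k) * ∫ u : ℝ, u^k * bump u := by
  have h2 := two_pow_pos j
  have hF : (fun t : ℝ => t^k * TT j t)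
      = fun t : ℝ => (aa j * ((2:ℝ)^j)⁻¹) *
        ((fun u : ℝ => ((2:ℝ)^j * u)^k * bump u) (((2:ℝ)^j)⁻¹ * t)) := by
    funext t
    simp only [TT]
    rw [pull_const j t]
    ring
  rw [hF, integral_const_mul,
    Measure.integral_comp_mul_left (fun u : ℝ => ((2:ℝ)^j * u)^k * bump u) (((2:ℝ)^j)⁻¹)]
  have habs : |(((2:ℝ)^j)⁻¹)⁻¹| = (2:ℝ)^j := by
    rw [inv_inv, abs_of_pos h2]
  rw [habs]
  have hpull : ∫ u : ℝ, ((2:ℝ)^j * u)^k * bump u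
      = (2:ℝ)^(j*k) * ∫ u : ℝ, u^k * bump u := by
    rw [← integral_const_mul]
    congr 1
    funext u
    rw [mul_pow, pow_mul]
    ring
  rw [smul_eq_mul, hpull]
  field_simp

lemma integral_norm_tk_TT (k j : ℕ) :
    ∫ t : ℝ, ‖t^k * TT j t‖ = |aa j| * 2^(j*k) * ∫ u : ℝ, ‖u^k * bump u‖ := by
  have h2 := two_pow_pos j
  have hF : (fun t : ℝ => ‖t^k * TT j t‖)
      = fun t : ℝ => (|aa j| * ((2:ℝ)^j)⁻¹) *
        ((fun u : ℝ => ‖((2:ℝ)^j * u)^k * bump u‖) (((2:ℝ)^j)⁻¹ * t)) := by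
    funext t
    simp only [TT, Real.norm_eq_abs]
    rw [pull_const j t]
    rw [show t^k * ((aa j * ((2:ℝ)^j)⁻¹) * bump (((2:ℝ)^j)⁻¹ * t))
        = (aa j * ((2:ℝ)^j)⁻¹) * (t^k * bump (((2:ℝ)^j)⁻¹ * t)) from by ring]
    rw [abs_mul, abs_mul, abs_of_pos (show (0:ℝ) < ((2:ℝ)^j)⁻¹ by positivity)]
  rw [hF, integral_const_mul,
    Measure.integral_comp_mul_left (fun u : ℝ => ‖((2:ℝ)^j * u)^k * bump u‖) (((2:ℝ)^j)⁻¹)]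
  have habs : |(((2:ℝ)^j)⁻¹)⁻¹| = (2:ℝ)^j := by
    rw [inv_inv, abs_of_pos h2]
  rw [habs]
  have hpull : ∫ u : ℝ, ‖((2:ℝ)^j * u)^k * bump u‖
      = (2:ℝ)^(j*k) * ∫ u : ℝ, ‖u^k * bump u‖ := by
    rw [← integral_const_mul]
    congr 1
    funext u
    rw [Real.norm_eq_abs, Real.norm_eq_abs, mul_pow, mul_assoc, abs_mul,
      abs_of_pos (show (0:ℝ) < ((2:ℝ)^j)^k by positivity), ← pow_mul]
  rw [smul_eq_mul, hpull]
  field_simp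

lemma summable_abs_aux (k : ℕ) : Summable (fun j => |aa j| * 2 ^ (j*k)) := by
  have := (summable_aux k).abs
  apply this.congr
  intro j
  rw [abs_mul, abs_of_pos (show (0:ℝ) < 2^(j*k) by positivity)]

lemma integral_tk_gg (k : ℕ) :
    ∫ t : ℝ, t^k * gg t = s k * ∫ u : ℝ, u^k * bump u := by
  have hsum : Summable (fun j => ∫ t : ℝ, ‖t^k * TT j t‖) := by
    apply Summable.congr (((summable_abs_aux k).mul_right (∫ u : ℝ, ‖u^k * bump u‖)))
    intro j
    exact (integral_norm_tk_TT k j).symm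
  have hswap := integral_tsum_of_summable_integral_norm
    (fun j => integrable_tk_TT k j) hsum
  have hrw : (fun t : ℝ => t^k * gg t) = fun t : ℝ => ∑' j, t^k * TT j t := by
    funext t
    rw [gg]
    exact (tsum_mul_left).symm
  rw [hrw, ← hswap]
  have : (fun j => ∫ t : ℝ, t^k * TT j t)
      = fun j => (aa j * 2^(j*k)) * ∫ u : ℝ, u^k * bump u := by
    funext j
    exact integral_tk_TT k j
  rw [this, tsum_mul_right]
  rfl

lemma gg_tsupport : tsupport gg ⊆ Set.Ici (1:ℝ) := by
  have hsupp : Function.support gg ⊆ Set.Ici (5/4 : ℝ) := by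
    intro t ht
    by_contra hc
    exact ht (gg_eq_zero (lt_of_not_ge hc))
  calc tsupport gg ⊆ Set.Ici (5/4 : ℝ) := closure_minimal hsupp isClosed_Ici
    _ ⊆ Set.Ici (1:ℝ) := Set.Ici_subset_Ici.2 (by norm_num)

end MomentsAux

/-- There exists a real-valued function `g` in the Schwartz space `𝓢(ℝ)`
such that `supp g ⊆ [1,∞)`, `∫ g ≠ 0`, and `∫ t^k g(t) dt = 0` for every integer `k ≥ 1`. -/
theorem exists_schwartz_support_Ici_one_integral_ne_zero_moments_zero :
    ∃ g : SchwartzMap ℝ ℝ,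
      tsupport ⇑g ⊆ Set.Ici (1 : ℝ) ∧
      (∫ t : ℝ, g t) ≠ 0 ∧
      ∀ k : ℕ, 1 ≤ k → (∫ t : ℝ, t ^ k * g t) = 0 := by
  refine ⟨MomentsAux.GG, ?_, ?_, ?_⟩
  · exact MomentsAux.gg_tsupport
  · have h0 := MomentsAux.integral_tk_gg 0
    simp only [pow_zero, one_mul] at h0
    show (∫ t : ℝ, MomentsAux.gg t) ≠ 0
    rw [h0]
    exact mul_ne_zero MomentsAux.s_zero_pos.ne' MomentsAux.bump.integral_pos.ne'
  · intro k hk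
    show (∫ t : ℝ, t ^ k * MomentsAux.gg t) = 0
    rw [MomentsAux.integral_tk_gg k, MomentsAux.s_eq_zero hk, zero_mul]
end

section
/- For every h, φ ∈ 𝓢(ℝⁿ), the function y ↦ ∫_{ℝⁿ} 1_{ℝⁿ₊}(x)·h(x)·φ(x − y) dx belongs to 𝓢(ℝⁿ). If moreover supp φ ⊆ {x ∈ ℝⁿ : xₙ ≤ 0}, then this function vanishes at every y with yₙ ≤ 0, hence is supported in the closed half-space {y : yₙ ≥ 0}. -/
/-!
Truncate `h` to the half-space: `c = 1_{ℝⁿ₊} h` is no longer smooth, but it is integrable against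
every power of `‖x‖`, so its Fourier transform `𝓕 c` is smooth with polynomially bounded
derivatives. The function in question is the convolution of `c` with `x ↦ φ (-x)`, i.e. the Fourier
multiplier with symbol `𝓕 c` applied to a Schwartz function, hence Schwartz. The support statement
is immediate: for `yₙ ≤ 0` and `xₙ > 0` the point `x - y` lies outside `supp φ`.
-/

open MeasureTheory Filter Topology FourierTransform Convolution ContinuousLinearMap

theorem SchwartzMap.integrable_pow_mul_indicator {D F : Type*} [NormedAddCommGroup D]
    [NormedSpace ℝ D] [MeasurableSpace D] [BorelSpace D] [SecondCountableTopology D]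
    [NormedAddCommGroup F] [NormedSpace ℝ F] (μ : Measure D) [μ.HasTemperateGrowth]
    (f : SchwartzMap D F) {s : Set D} (hs : MeasurableSet s) (k : ℕ) :
    Integrable (fun x ↦ ‖x‖ ^ k * ‖s.indicator f x‖) μ :=
  (f.integrable_pow_mul μ k).mono'
    ((continuous_norm.pow k).aestronglyMeasurable.mul
      (f.continuous.aestronglyMeasurable.indicator hs).norm)
    (.of_forall fun x ↦ by
      rw [norm_mul, norm_pow, norm_norm, norm_norm]
      gcongr
      exact norm_indicator_le_norm_self _ x)

section InnerProductSpace

variable {V F : Type*} [NormedAddCommGroup V] [InnerProductSpace ℝ V] [FiniteDimensional ℝ V]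
  [MeasurableSpace V] [BorelSpace V] [NormedAddCommGroup F] [NormedSpace ℂ F]

theorem Real.hasTemperateGrowth_fourier {c : V → F} (hc : AEStronglyMeasurable c)
    (hc_moments : ∀ k : ℕ, Integrable (fun v ↦ ‖v‖ ^ k * ‖c v‖)) :
    (𝓕 c).HasTemperateGrowth := by
  have hc_moments' : ∀ k : ℕ, (k : ℕ∞) ≤ ⊤ → Integrable (fun v ↦ ‖v‖ ^ k * ‖c v‖) :=
    fun k _ ↦ hc_moments k
  refine ⟨Real.contDiff_fourier hc_moments', fun N ↦ ?_⟩
  refine ⟨0, (2 * Real.pi * ‖innerSL (E := V) ℝ‖) ^ N * ∫ v, ‖v‖ ^ N * ‖c v‖, fun w ↦ ?_⟩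
  rw [Real.iteratedFDeriv_fourier hc_moments' hc le_top, pow_zero, mul_one, ← integral_const_mul]
  refine (VectorFourier.norm_fourierIntegral_le_integral_norm _ _ _ _ _).trans
    (integral_mono_of_nonneg (.of_forall fun v ↦ norm_nonneg _) ((hc_moments N).const_mul _)
      (.of_forall fun v ↦ ?_))
  simpa [mul_assoc] using VectorFourier.norm_fourierPowSMulRight_le (innerSL ℝ) c v N

theorem SchwartzMap.fourierMultiplierCLM_fourier_eq_convolution [CompleteSpace F] {c : V → ℂ}
    (hc : Integrable c) (hc_growth : (𝓕 c).HasTemperateGrowth) (ψ : SchwartzMap V F) (y : V) :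
    fourierMultiplierCLM F (𝓕 c) ψ y = (c ⋆[lsmul ℂ ℂ] ψ) y := by
  set g := fourierMultiplierCLM F (𝓕 c) ψ
  have hFg : 𝓕 (g : V → F) = 𝓕 (c ⋆[lsmul ℂ ℂ] ψ) := by
    ext ξ
    rw [← SchwartzMap.fourier_coe, Real.fourier_smul_convolution_eq hc ψ.integrable]
    simp [g, fourierMultiplierCLM_apply, smulLeftCLM_apply_apply hc_growth,
      SchwartzMap.fourier_coe]
  have hconv_cont : Continuous (c ⋆[lsmul ℂ ℂ] ψ) :=
    BddAbove.continuous_convolution_right_of_integrable _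
      ⟨SchwartzMap.seminorm ℝ 0 0 ψ, fun _ ⟨x, hx⟩ ↦ hx ▸ norm_le_seminorm ℝ ψ x⟩ hc ψ.continuous
  calc g y = 𝓕⁻ (𝓕 (g : V → F)) y := by
        rw [g.continuous.fourierInv_fourier_eq g.integrable (by simpa using (𝓕 g).integrable)]
    _ = (c ⋆[lsmul ℂ ℂ] ψ) y := by
        rw [hFg, hconv_cont.fourierInv_fourier_eq (hc.integrable_convolution _ ψ.integrable)
          (hFg ▸ by simpa using (𝓕 g).integrable)]

theorem SchwartzMap.exists_eq_setIntegral_mul_comp_sub (f φ : SchwartzMap V ℝ) {s : Set V}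
    (hs : MeasurableSet s) : ∃ g : SchwartzMap V ℝ, ∀ y, g y = ∫ x in s, f x * φ (x - y) := by
  set fℂ := f.postcompCLM Complex.ofRealCLM
  set c := s.indicator fℂ
  have hc : AEStronglyMeasurable c := fℂ.continuous.aestronglyMeasurable.indicator hs
  have hc_int : Integrable c :=
    (integrable_norm_iff hc).1 (by simpa using fℂ.integrable_pow_mul_indicator volume hs 0)
  have hc_growth := Real.hasTemperateGrowth_fourier hc (fℂ.integrable_pow_mul_indicator volume hs)
  set ψ := (compCLMOfContinuousLinearEquiv ℝ (ContinuousLinearEquiv.neg ℝ) φ).postcompCLM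
    Complex.ofRealCLM
  refine ⟨(fourierMultiplierCLM ℂ (𝓕 c) ψ).postcompCLM Complex.reCLM, fun y ↦ ?_⟩
  have hintegrand : ∀ x, c x • ψ (y - x) = ((s.indicator (fun x ↦ f x * φ (x - y)) x : ℝ) : ℂ) := by
    intro x
    by_cases hx : x ∈ s <;> simp [c, ψ, fℂ, hx]
  rw [postcompCLM_apply, fourierMultiplierCLM_fourier_eq_convolution hc_int hc_growth,
    convolution_lsmul]
  simp_rw [hintegrand]
  rw [Complex.reCLM_apply, integral_complex_ofReal, integral_indicator hs, Complex.ofReal_re]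

end InnerProductSpace

theorem SchwartzMap.exists_eq_setIntegral_mul_comp_sub_pi {ι : Type*} [Fintype ι]
    (f φ : SchwartzMap (ι → ℝ) ℝ) {s : Set (ι → ℝ)} (hs : MeasurableSet s) :
    ∃ g : SchwartzMap (ι → ℝ) ℝ, ∀ y, g y = ∫ x in s, f x * φ (x - y) := by
  let e := EuclideanSpace.equiv ι ℝ
  obtain ⟨g, hg⟩ := exists_eq_setIntegral_mul_comp_sub (compCLMOfContinuousLinearEquiv ℝ e f)
    (compCLMOfContinuousLinearEquiv ℝ e φ) (hs.preimage e.continuous.measurable)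
  refine ⟨compCLMOfContinuousLinearEquiv ℝ e.symm g, fun y ↦ ?_⟩
  simp only [hg, compCLMOfContinuousLinearEquiv_apply, Function.comp_apply, map_sub,
    ContinuousLinearEquiv.apply_symm_apply]
  exact (PiLp.volume_preserving_ofLp ι).setIntegral_preimage_emb
    (MeasurableEquiv.toLp 2 (ι → ℝ)).symm.measurableEmbedding (fun x ↦ f x * φ (x - y)) s

/-- For `h, φ ∈ 𝓢(ℝⁿ)`, the function
`y ↦ ∫_{ℝⁿ₊} h(x)·φ(x − y) dx` belongs to `𝓢(ℝⁿ)`; if moreover `supp φ ⊆ {xₙ ≤ 0}`, then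
this function vanishes at every `y` with `yₙ ≤ 0`, hence is supported in `{yₙ ≥ 0}`. -/
theorem halfspace_convolution_schwartz (n : ℕ)
    (h φ : SchwartzMap (Fin (n+1) → ℝ) ℝ) :
    ∃ g : SchwartzMap (Fin (n+1) → ℝ) ℝ,
      (∀ y : Fin (n+1) → ℝ,
        g y = ∫ x in {x : Fin (n+1) → ℝ | 0 < x (Fin.last n)}, h x * φ (x - y)) ∧
      (tsupport ⇑φ ⊆ {x : Fin (n+1) → ℝ | x (Fin.last n) ≤ 0} →
        (∀ y : Fin (n+1) → ℝ, y (Fin.last n) ≤ 0 → g y = 0) ∧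
        tsupport ⇑g ⊆ {y : Fin (n+1) → ℝ | 0 ≤ y (Fin.last n)}) := by
  obtain ⟨g, hg⟩ := SchwartzMap.exists_eq_setIntegral_mul_comp_sub_pi h φ
    (measurableSet_lt measurable_const (measurable_pi_apply (Fin.last n)))
  refine ⟨g, hg, fun hφ ↦ ?_⟩
  have hvanish : ∀ y : Fin (n+1) → ℝ, y (Fin.last n) ≤ 0 → g y = 0 := by
    intro y hy
    rw [hg, setIntegral_eq_zero_of_forall_eq_zero]
    intro x hx
    have hxy : x - y ∉ tsupport φ := fun hmem ↦ by
      have : x (Fin.last n) - y (Fin.last n) ≤ 0 := hφ hmem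
      linarith [hx.out]
    rw [image_eq_zero_of_notMem_tsupport hxy, mul_zero]
  refine ⟨hvanish, closure_minimal (fun y hy ↦ ?_)
    (isClosed_le continuous_const (continuous_apply _))⟩
  by_contra hneg
  exact hy (hvanish y (not_le.1 hneg).le)
end
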